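/- arXiv:2309.14443 — 5 statements merged into one kernel-verified Lean document; each statement's English description precedes it below -/
import Mathlib

section
/- For d = 2 and p = 55/159, one has M^{d,p} < 1; that is, sup_{λ ≥ 0} f^{2,55/159}(λ) < 1. (This is the analytic inequality underlying the bound S_2 ≤ 55/159 in Theorem 1.) -/
/-!
For `d = 2` the sum defining `f` has two terms, and with `t = e^{-λ}` it reads
`f(λ) = e^{-p*} (Φ + t^a - Φ t^b)` with `a = 2p̂ - 1`, `b = p̂`. When `1/3 < p < 1/2` we have
`0 < a < b`, and weighted AM-GM bounds `t^a - Φ t^b` uniformly in `t` by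
`(1 - a/b) (a/(bΦ))^{a/(b-a)}`. At `p = 55/159` the resulting bound on `M` is
`e^{-104/153} + (49/55) (6/55)^{6/49} e^{-49/153} ≈ 0.99984`, which is certified by Taylor lower
bounds for `exp` and by comparing `(6/55)^6` with a 49th power.
-/
open Real Finset

/-- `frogT x y u = s_{u+1,u}(x,y)`, the diagonal of the recursion. -/
noncomputable def frogT (x y : ℝ) : ℕ → ℝ
  | 0 => 1
  | k + 1 => 1 - ∑ i ∈ (Finset.range (k + 1)).attach,
      (((k + 1).choose i.1 : ℕ) : ℝ) * (x * y ^ (i.1 + 1)) ^ (k + 1 - i.1) * frogT x y i.1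
  decreasing_by exact Finset.mem_range.mp i.2

/-- `frogS d u x y = s_{d,u}(x,y)`. -/
noncomputable def frogS (d u : ℕ) (x y : ℝ) : ℝ :=
  (((d - 1).choose u : ℕ) : ℝ) * (x * y ^ (u + 1)) ^ (d - 1 - u) * frogT x y u

noncomputable def pstar (d : ℕ) (p : ℝ) : ℝ := p * ((d : ℝ) - 1) / ((d : ℝ) - ((d : ℝ) + 1) * p)

noncomputable def phat (p : ℝ) : ℝ := p / (1 - p)

noncomputable def Phi (d : ℕ) (p : ℝ) : ℝ := Real.exp (-(1 - pstar d p) / (d : ℝ))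

noncomputable def Lam (d : ℕ) (p l : ℝ) : ℝ := Real.exp (-((1 - phat p) * l) / ((d : ℝ) - 1))

noncomputable def frogF (d : ℕ) (p l : ℝ) : ℝ :=
  Real.exp (-(pstar d p)) * ∑ u ∈ Finset.range d,
    Real.exp ((1 - phat p * (1 + (u : ℝ))) * l) * frogS d u (Phi d p) (Lam d p l)

noncomputable def frogM (d : ℕ) (p : ℝ) : ℝ := sSup (frogF d p '' Set.Ici 0)

lemma rpow_le_mul_rpow_add {a b c t : ℝ} (ha : 0 < a) (hab : a < b) (hc : 0 < c) (ht : 0 ≤ t) :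
    t ^ a ≤ c * t ^ b + (1 - a / b) * (a / (b * c)) ^ (a / (b - a)) := by
  have hb : 0 < b := ha.trans hab
  have hba : 0 < b - a := sub_pos.mpr hab
  -- the two points are chosen so that their weighted geometric mean is exactly `t ^ a`
  have key := Real.geom_mean_le_arith_mean2_weighted (w₁ := a / b) (w₂ := 1 - a / b)
    (p₁ := b / a * c * t ^ b) (p₂ := (a / (b * c)) ^ (a / (b - a)))
    (by positivity) (by rw [sub_nonneg, div_le_one hb]; exact hab.le) (by positivity)
    (by positivity) (by ring)
  have hexp : a / (b - a) * (1 - a / b) = a / b := by field_simp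
  have hprod : b / a * c * t ^ b * (a / (b * c)) = t ^ b := by field_simp
  rw [← Real.rpow_mul (by positivity), hexp, ← Real.mul_rpow (by positivity) (by positivity),
    hprod, ← Real.rpow_mul ht, mul_div_cancel₀ a hb.ne'] at key
  calc t ^ a ≤ a / b * (b / a * c * t ^ b) + (1 - a / b) * (a / (b * c)) ^ (a / (b - a)) := key
    _ = c * t ^ b + (1 - a / b) * (a / (b * c)) ^ (a / (b - a)) := by field_simp

lemma exp_neg_le_of_inv_le_sum {x c : ℝ} (hx : 0 ≤ x) (hc : 0 < c) (n : ℕ)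
    (h : c⁻¹ ≤ ∑ i ∈ range n, x ^ i / i.factorial) : exp (-x) ≤ c := by
  rw [exp_neg, inv_le_comm₀ (exp_pos x) hc]
  exact h.trans (sum_le_exp_of_nonneg hx n)

lemma rpow_natCast_div_le_of_pow_le {x y : ℝ} (hx : 0 ≤ x) (hy : 0 ≤ y) {m n : ℕ} (hn : 0 < n)
    (h : x ^ m ≤ y ^ n) : x ^ ((m : ℝ) / n) ≤ y := by
  rw [div_eq_mul_inv, Real.rpow_mul hx, Real.rpow_natCast,
    Real.rpow_inv_le_iff_of_pos (by positivity) hy (by exact_mod_cast hn), Real.rpow_natCast]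
  exact h

lemma frogS_two_zero (x y : ℝ) : frogS 2 0 x y = x * y := by
  simp [frogS, frogT]

lemma frogS_two_one (x y : ℝ) : frogS 2 1 x y = 1 - x * y := by
  rw [frogS, frogT, Finset.sum_attach (Finset.range 1)
    (fun i => ((Nat.choose 1 i : ℕ) : ℝ) * (x * y ^ (i + 1)) ^ (1 - i) * frogT x y i)]
  simp [frogT]

lemma frogF_two (p l : ℝ) :
    frogF 2 p l = exp (-pstar 2 p) * (Phi 2 p + exp (-l) ^ (2 * phat p - 1)
      - Phi 2 p * exp (-l) ^ phat p) := by
  have hLam : Lam 2 p l = exp (-((1 - phat p) * l)) := by norm_num [Lam]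
  simp only [frogF, Finset.sum_range_succ, Finset.sum_range_zero, frogS_two_zero, frogS_two_one,
    hLam, ← Real.exp_mul]
  have hcancel : exp ((1 - phat p * (1 + ((0 : ℕ) : ℝ))) * l) * exp (-((1 - phat p) * l)) = 1 := by
    rw [← Real.exp_add]; norm_num
  have hsplit : exp ((1 - phat p * (1 + ((1 : ℕ) : ℝ))) * l) * exp (-((1 - phat p) * l))
      = exp (-l * phat p) := by
    rw [← Real.exp_add]; ring_nf
  have hlead : exp ((1 - phat p * (1 + ((1 : ℕ) : ℝ))) * l) = exp (-l * (2 * phat p - 1)) := by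
    ring_nf
  linear_combination exp (-pstar 2 p) * Phi 2 p * (hcancel - hsplit) + exp (-pstar 2 p) * hlead

noncomputable def frogBoundTwo (p : ℝ) : ℝ :=
  exp (-pstar 2 p) * (Phi 2 p + (1 - (2 * phat p - 1) / phat p)
    * ((2 * phat p - 1) / (phat p * Phi 2 p)) ^ ((2 * phat p - 1) / (phat p - (2 * phat p - 1))))

lemma frogF_two_le {p : ℝ} (hp₁ : 1 / 3 < p) (hp₂ : p < 1 / 2) (l : ℝ) :
    frogF 2 p l ≤ frogBoundTwo p := by
  have hphat₁ : 1 / 2 < phat p := by rw [phat, lt_div_iff₀ (by linarith)]; linarith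
  have hphat₂ : phat p < 1 := by rw [phat, div_lt_one (by linarith)]; linarith
  have young := rpow_le_mul_rpow_add (by linarith : 0 < 2 * phat p - 1) (by linarith)
    (show 0 < Phi 2 p from exp_pos _) (exp_pos (-l)).le
  rw [frogF_two, frogBoundTwo]
  gcongr
  linarith

lemma frogM_two_le {p : ℝ} (hp₁ : 1 / 3 < p) (hp₂ : p < 1 / 2) : frogM 2 p ≤ frogBoundTwo p :=
  csSup_le (Set.nonempty_Ici.image _) (by rintro _ ⟨l, -, rfl⟩; exact frogF_two_le hp₁ hp₂ l)

lemma frogBoundTwo_eq : frogBoundTwo (55 / 159)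
    = exp (-(104 / 153)) + 49 / 55 * (6 / 55) ^ ((6 : ℝ) / 49) * exp (-(49 / 153)) := by
  have hpstar : pstar 2 (55 / 159) = 55 / 153 := by norm_num [pstar]
  have hphat : phat (55 / 159) = 55 / 104 := by norm_num [phat]
  have hPhi : Phi 2 (55 / 159) = exp (-(49 / 153)) := by norm_num [Phi, hpstar]
  have hbase :
      (2 * (55 / 104) - 1) / (55 / 104 * exp (-(49 / 153))) = 6 / 55 * exp (49 / 153) := by
    rw [exp_neg]; field_simp; norm_num
  have hexp₁ : exp (-(104 / 153)) = exp (-(55 / 153)) * exp (-(49 / 153)) := by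
    rw [← exp_add]; norm_num
  have hexp₂ : exp (-(49 / 153)) = exp (-(55 / 153)) * exp (2 / 51) := by
    rw [← exp_add]; norm_num
  rw [frogBoundTwo, hpstar, hphat, hPhi, hbase, Real.mul_rpow (by norm_num) (exp_pos _).le,
    ← Real.exp_mul]
  norm_num only
  linear_combination -hexp₁ - 49 / 55 * (6 / 55 : ℝ) ^ ((6 : ℝ) / 49) * hexp₂

lemma frogBoundTwo_lt_one : frogBoundTwo (55 / 159) < 1 := by
  have h₁ : exp (-(104 / 153)) ≤ (50675 / 100000 : ℝ) :=
    exp_neg_le_of_inv_le_sum (by norm_num) (by norm_num) 8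
      (by norm_num [Finset.sum_range_succ, Nat.factorial])
  have h₂ : exp (-(49 / 153)) ≤ (72596 / 100000 : ℝ) :=
    exp_neg_le_of_inv_le_sum (by norm_num) (by norm_num) 8
      (by norm_num [Finset.sum_range_succ, Nat.factorial])
  have h₃ : (6 / 55 : ℝ) ^ ((6 : ℝ) / 49) ≤ 7624 / 10000 := by
    exact_mod_cast rpow_natCast_div_le_of_pow_le (m := 6) (n := 49) (by norm_num) (by norm_num)
      (by norm_num) (by norm_num)
  calc frogBoundTwo (55 / 159)
      = exp (-(104 / 153)) + 49 / 55 * (6 / 55) ^ ((6 : ℝ) / 49) * exp (-(49 / 153)) :=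
        frogBoundTwo_eq
    _ ≤ 50675 / 100000 + 49 / 55 * (7624 / 10000) * (72596 / 100000) := by gcongr
    _ < 1 := by norm_num

/-- Theorem 1 (analytic core): `M^{2,55/159} < 1`, underlying `S_2 ≤ 55/159`. -/
theorem frogM_lt_one_d2 : frogM 2 ((55 : ℝ) / 159) < 1 :=
  (frogM_two_le (by norm_num) (by norm_num)).trans_lt frogBoundTwo_lt_one
end

section
/- For d = 3 and p = 42/145, one has M^{d,p} < 1; that is, sup_{λ ≥ 0} f^{3,42/145}(λ) < 1. (This is the analytic inequality underlying the bound S_3 ≤ 42/145 in Theorem 1.) -/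
open Real Finset

/-! For `d = 3` and `p = 42/145` one has `p* = 28/89`, `p̂ = 42/103`, `Φ₃ = e^{-61/267}` and
`Λ₃(λ) = T^61` with `T = e^{-λ/206} ∈ (0, 1]`, so `f(λ) = e^{-28/89} G(Φ₃, T)` for the polynomial
`G(x, t) = x² + 2x t^84 - 2x² t^145 + t^46 - (x² + 2x) t^168 + 2x² t^229`.
Its maximum over `t ∈ [0, 1]` is about `1.36922`, just below `e^{28/89} ≈ 1.36972`.

After enclosing `Φ₃` between two rationals, `G` is split into its convex positive part minus its
convex negative part. On each piece of a subdivision of `[0, 1]`, replacing the negative part by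
its tangent at the midpoint leaves a convex majorant, which is maximal at an endpoint; this
reduces the bound to finitely many exact rational inequalities. -/

def powTangent (n : ℕ) (m t : ℝ) : ℝ := m ^ n + n * m ^ (n - 1) * (t - m)

lemma powTangent_le_pow (n : ℕ) {m t : ℝ} (hm : 0 < m) (ht : 0 ≤ t) :
    powTangent n m t ≤ t ^ n := by
  cases n with
  | zero => simp [powTangent]
  | succ n =>
    have bernoulli := one_add_mul_sub_le_pow (n := n + 1)
      (by linarith [div_nonneg ht hm.le] : -1 ≤ t / m)
    calc powTangent (n + 1) m t = m ^ (n + 1) * (1 + (n + 1 : ℕ) * (t / m - 1)) := by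
          simp only [powTangent, Nat.add_sub_cancel, pow_succ]; field_simp
      _ ≤ m ^ (n + 1) * (t / m) ^ (n + 1) := by gcongr
      _ = t ^ (n + 1) := by rw [div_pow, mul_div_cancel₀ _ (pow_pos hm _).ne']

lemma concaveOn_powTangent (n : ℕ) (m : ℝ) : ConcaveOn ℝ Set.univ (powTangent n m) :=
  ⟨convex_univ, fun x _ y _ a b _ _ hab => le_of_eq <| by
    simp only [powTangent, smul_eq_mul]
    linear_combination (m ^ n - n * m ^ (n - 1) * m) * hab⟩

lemma sub_le_max_of_convexOn_of_concaveOn_le {g h ℓ : ℝ → ℝ} {a b t : ℝ}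
    (hg : ConvexOn ℝ (Set.Icc a b) g) (hℓ : ConcaveOn ℝ (Set.Icc a b) ℓ)
    (hℓh : ∀ s ∈ Set.Icc a b, ℓ s ≤ h s) (ht : t ∈ Set.Icc a b) :
    g t - h t ≤ max (g a - ℓ a) (g b - ℓ b) := by
  have hab : a ≤ b := ht.1.trans ht.2
  calc g t - h t ≤ (g - ℓ) t := by simp only [Pi.sub_apply]; linarith [hℓh t ht]
    _ ≤ max ((g - ℓ) a) ((g - ℓ) b) :=
      (hg.sub hℓ).le_max_of_mem_Icc (Set.left_mem_Icc.2 hab) (Set.right_mem_Icc.2 hab) ht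

lemma le_on_Icc_of_isChain {f : ℝ → ℝ} {C : ℝ} :
    ∀ (a b : ℝ) (l : List ℝ),
      List.IsChain (fun x y => ∀ t ∈ Set.Icc x y, f t ≤ C) (a :: b :: l) →
      ∀ t ∈ Set.Icc a ((b :: l).getLast (List.cons_ne_nil b l)), f t ≤ C
  | a, b, [], h, t, ht => h.rel t ht
  | a, b, c :: l, h, t, ht => by
    rcases le_or_gt t b with htb | hbt
    · exact h.rel t ⟨ht.1, htb⟩
    · exact le_on_Icc_of_isChain b c l h.of_cons t ⟨hbt.le, ht.2⟩

lemma frogT_zero (x y : ℝ) : frogT x y 0 = 1 := by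
  simp [frogT]

lemma frogT_one (x y : ℝ) : frogT x y 1 = 1 - x * y := by
  rw [frogT, Finset.sum_attach (Finset.range 1) (fun i =>
    ((Nat.choose 1 i : ℕ) : ℝ) * (x * y ^ (i + 1)) ^ (1 - i) * frogT x y i)]
  simp [frogT]

lemma frogT_two (x y : ℝ) :
    frogT x y 2 = 1 - (x * y) ^ 2 - 2 * (x * y ^ 2) * (1 - x * y) := by
  rw [frogT, Finset.sum_attach (Finset.range 2) (fun i =>
    ((Nat.choose 2 i : ℕ) : ℝ) * (x * y ^ (i + 1)) ^ (2 - i) * frogT x y i)]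
  simp only [Finset.sum_range_succ, Finset.sum_range_zero, frogT_zero, frogT_one,
    Nat.choose_zero_right, Nat.choose_one_right, Nat.reduceSub, Nat.cast_one, Nat.cast_ofNat]
  ring

def frogGain (x t : ℝ) : ℝ := x ^ 2 + 2 * x * t ^ 84 + t ^ 46 + 2 * x ^ 2 * t ^ 229

def frogLoss (x t : ℝ) : ℝ := 2 * x ^ 2 * t ^ 145 + (x ^ 2 + 2 * x) * t ^ 168

def frogLossTangent (x m t : ℝ) : ℝ :=
  2 * x ^ 2 * powTangent 145 m t + (x ^ 2 + 2 * x) * powTangent 168 m t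

lemma convexOn_frogGain {x : ℝ} (hx : 0 ≤ x) : ConvexOn ℝ (Set.Ici 0) (frogGain x) := by
  have hpow (n : ℕ) {c : ℝ} (hc : 0 ≤ c) : ConvexOn ℝ (Set.Ici 0) (fun t : ℝ => c * t ^ n) :=
    (convexOn_pow n).smul hc
  exact (((convexOn_const (x ^ 2) (convex_Ici 0)).add (hpow 84 (by positivity))).add
    (convexOn_pow 46)).add (hpow 229 (by positivity))

lemma concaveOn_frogLossTangent {x : ℝ} (hx : 0 ≤ x) (m : ℝ) :
    ConcaveOn ℝ Set.univ (frogLossTangent x m) :=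
  ((concaveOn_powTangent 145 m).smul (by positivity : (0 : ℝ) ≤ 2 * x ^ 2)).add
    ((concaveOn_powTangent 168 m).smul (by positivity : (0 : ℝ) ≤ x ^ 2 + 2 * x))

lemma frogLossTangent_le {x m t : ℝ} (hx : 0 ≤ x) (hm : 0 < m) (ht : 0 ≤ t) :
    frogLossTangent x m t ≤ frogLoss x t := by
  unfold frogLossTangent frogLoss
  gcongr <;> exact powTangent_le_pow _ hm ht

lemma frogGain_sub_frogLoss_le_max {x₀ x x₁ a b m t : ℝ} (hx₀ : 0 ≤ x₀) (hx₀x : x₀ ≤ x)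
    (hxx₁ : x ≤ x₁) (ha : 0 ≤ a) (hm : 0 < m) (ht : t ∈ Set.Icc a b) :
    frogGain x t - frogLoss x t ≤
      max (frogGain x₁ a - frogLossTangent x₀ m a) (frogGain x₁ b - frogLossTangent x₀ m b) := by
  have ht₀ : 0 ≤ t := ha.trans ht.1
  have hx : 0 ≤ x := hx₀.trans hx₀x
  have hgain : frogGain x t ≤ frogGain x₁ t := by unfold frogGain; gcongr
  have hloss : frogLoss x₀ t ≤ frogLoss x t := by unfold frogLoss; gcongr
  have hIcc : Set.Icc a b ⊆ Set.Ici 0 := fun s hs => ha.trans hs.1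
  have hmajor := sub_le_max_of_convexOn_of_concaveOn_le
    ((convexOn_frogGain (hx.trans hxx₁)).subset hIcc (convex_Icc a b))
    ((concaveOn_frogLossTangent hx₀ m).subset (Set.subset_univ _) (convex_Icc a b))
    (fun s hs => frogLossTangent_le hx₀ hm (ha.trans hs.1)) ht
  linarith

lemma frogF_three_eq (l : ℝ) :
    frogF 3 (42 / 145) l = exp (-(28 / 89)) *
      (frogGain (exp (-(61 / 267))) (exp (-(l / 206))) -
        frogLoss (exp (-(61 / 267))) (exp (-(l / 206)))) := by
  rw [exp_neg (l / 206)]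
  set E := exp (l / 206)
  have hE (k : ℕ) (c : ℝ) (hc : c = k / 206) : exp (c * l) = E ^ k := by
    rw [← exp_nat_mul, hc]; ring_nf
  have hpstar : pstar 3 (42 / 145) = 28 / 89 := by norm_num [pstar]
  have hphat : phat (42 / 145) = 42 / 103 := by norm_num [phat]
  have hPhi : Phi 3 (42 / 145) = exp (-(61 / 267)) := by norm_num [Phi, hpstar]
  have hLam : Lam 3 (42 / 145) l = E⁻¹ ^ 61 := by
    rw [Lam, hphat, ← exp_neg, ← exp_nat_mul]; ring_nf
  simp only [frogF, frogS, hpstar, hphat, hPhi, hLam, Finset.sum_range_succ, Finset.sum_range_zero]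
  norm_num [frogT_zero, frogT_one, frogT_two]
  rw [hE 122 _ (by norm_num), hE 38 _ (by norm_num), exp_neg (23 / 103 * l),
    hE 46 _ (by norm_num)]
  have hE0 : E ≠ 0 := exp_ne_zero _
  unfold frogGain frogLoss
  field_simp
  ring

lemma frogGain_sub_frogLoss_le {x t : ℝ} (hx₀ : 79575458 / 10 ^ 8 ≤ x)
    (hx₁ : x ≤ 79575464 / 10 ^ 8) (ht : t ∈ Set.Icc (0 : ℝ) 1) :
    frogGain x t - frogLoss x t ≤ 13695815 / 10 ^ 7 := by
  -- The pieces shrink towards the maximiser `t ≈ 0.99068`, near which the endpoint checks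
  -- hold with slack below `10⁻⁶`.
  refine le_on_Icc_of_isChain (f := fun t => frogGain x t - frogLoss x t) 0 (49 / 50)
    [98653 / 100000, 19777 / 20000, 197973 / 200000, 7923 / 8000, 24769 / 25000,
      49557 / 50000, 99173 / 100000, 99281 / 100000, 3979 / 4000, 199589 / 200000, 1]
    ?_ t ht
  refine List.IsChain.imp (R := fun a b => 0 ≤ a ∧ 0 < (a + b) / 2 ∧
      max (frogGain (79575464 / 10 ^ 8) a - frogLossTangent (79575458 / 10 ^ 8) ((a + b) / 2) a)
        (frogGain (79575464 / 10 ^ 8) b - frogLossTangent (79575458 / 10 ^ 8) ((a + b) / 2) b)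
        ≤ 13695815 / 10 ^ 7)
    (fun a b ⟨ha, hm, hmax⟩ s hs =>
      (frogGain_sub_frogLoss_le_max (by norm_num) hx₀ hx₁ ha hm hs).trans hmax) ?_
  simp only [List.isChain_cons_cons, List.isChain_singleton, and_true]
  norm_num [frogGain, frogLossTangent, powTangent]

lemma abs_exp_neg_sub_sum_le {x : ℝ} (hx₀ : 0 ≤ x) (hx₁ : x ≤ 1) {n : ℕ} (hn : 0 < n) :
    |exp (-x) - ∑ i ∈ Finset.range n, (-x) ^ i / i.factorial| ≤
      x ^ n * (n.succ / (n.factorial * n)) := by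
  simpa only [abs_neg, abs_of_nonneg hx₀] using
    Real.exp_bound (x := -x) (by rwa [abs_neg, abs_of_nonneg hx₀]) hn

lemma exp_neg_61_div_267_mem :
    exp (-(61 / 267)) ∈ Set.Icc (79575458 / 10 ^ 8 : ℝ) (79575464 / 10 ^ 8) := by
  have h := abs_exp_neg_sub_sum_le (x := 61 / 267) (by norm_num) (by norm_num) (n := 8)
    (by norm_num)
  rw [abs_sub_le_iff] at h
  norm_num [Finset.sum_range_succ, Nat.factorial] at h
  constructor <;> linarith [h.1, h.2]

lemma exp_neg_28_div_89_le : exp (-(28 / 89)) ≤ 73007660 / 10 ^ 8 := by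
  have h := abs_exp_neg_sub_sum_le (x := 28 / 89) (by norm_num) (by norm_num) (n := 10)
    (by norm_num)
  rw [abs_sub_le_iff] at h
  norm_num [Finset.sum_range_succ, Nat.factorial] at h
  linarith [h.1]

/-- Theorem 1 (analytic core): `M^{3,42/145} < 1`, underlying `S_3 ≤ 42/145`. -/
theorem frogM_lt_one_d3 : frogM 3 ((42 : ℝ) / 145) < 1 := by
  obtain ⟨hx₀, hx₁⟩ := exp_neg_61_div_267_mem
  have hf : ∀ l ∈ Set.Ici (0 : ℝ),
      frogF 3 (42 / 145) l ≤ 73007660 / 10 ^ 8 * (13695815 / 10 ^ 7) := by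
    intro l hl
    have hT : exp (-(l / 206)) ∈ Set.Icc (0 : ℝ) 1 :=
      ⟨(exp_pos _).le, exp_le_one_iff.2 (by linarith [Set.mem_Ici.1 hl])⟩
    rw [frogF_three_eq]
    exact (mul_le_mul_of_nonneg_left (frogGain_sub_frogLoss_le hx₀ hx₁ hT) (exp_pos _).le).trans
      (mul_le_mul_of_nonneg_right exp_neg_28_div_89_le (by norm_num))
  calc frogM 3 (42 / 145) ≤ 73007660 / 10 ^ 8 * (13695815 / 10 ^ 7) :=
        Real.sSup_le (by rintro _ ⟨l, hl, rfl⟩; exact hf l hl) (by norm_num)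
    _ < 1 := by norm_num
end

section
/- For d = 6 and p = 46/197, one has M^{d,p} < 1; that is, sup_{λ ≥ 0} f^{6,46/197}(λ) < 1. (This is the analytic inequality underlying the bound S_6 ≤ 46/197 in Theorem 1.) -/
/-!
Put `X = Φ₆ = exp (-21/172)` and `T = exp (-λ/151)`. Then `Λ₆(λ) = T ^ 21`, and every weight
`exp ((1 - p̂ (1 + u)) λ)` times the powers of `Λ₆` in `s_{6,u}` is a power of `T`, so
`f(λ) = exp (-23/86) * g(X, T)` for an explicit integer polynomial `g`, where `T ∈ (0, 1]`.
The maximum of `g(X, ·)` on `[0, 1]` is about `1.30601`, just below `exp (23/86) ≈ 1.30662`, and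
`g ≤ 1633/1250` is certified by interval arithmetic: on each piece `[l, u]` of a cover of `[0, 1]`,
expand every monomial in `t = l + δ` to order 8 with the remainder bounded at `u`, replace `x` by
the end of `[xL, xU] ∋ X` that is worse for the sign of its coefficient, and bound the resulting
polynomial in `δ ∈ [0, u - l]` by discarding its negative coefficients. The kernel checks these
rational inequalities by evaluation.
-/

open Real Finset

theorem Nat.choose_add_le_choose_mul_choose (b n j : ℕ) :
    b.choose (n + j) ≤ b.choose n * (b - n).choose j := by
  calc b.choose (n + j) ≤ b.choose (n + j) * (n + j).choose n :=
        Nat.le_mul_of_pos_right _ (Nat.choose_pos (Nat.le_add_right n j))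
    _ = b.choose n * (b - n).choose j := by
        rw [Nat.choose_mul (Nat.le_add_right n j), Nat.add_sub_cancel_left]

theorem List.sum_map_sum_comm {ι κ M : Type*} [AddCommMonoid M] (L : List ι) (s : Finset κ)
    (f : ι → κ → M) :
    (L.map fun i => ∑ k ∈ s, f i k).sum = ∑ k ∈ s, (L.map fun i => f i k).sum := by
  induction L with
  | nil => simp
  | cons i L ih => simp [ih, sum_add_distrib]

theorem exp_mul_exp_pow {a b : ℝ} {n m : ℕ} (h : a + n * b = m * b) :
    exp a * exp b ^ n = exp b ^ m := by
  rw [← exp_nat_mul, ← exp_nat_mul, ← exp_add, h]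

section BinomialTaylor

variable {δ l : ℝ}

theorem sum_range_choose_eq_add_pow {b n : ℕ} (h : b + 1 ≤ n) :
    ∑ k ∈ range n, δ ^ k * l ^ (b - k) * b.choose k = (δ + l) ^ b := by
  rw [add_pow]
  refine (sum_subset (range_subset_range.2 h) fun k _ hk => ?_).symm
  rw [Nat.choose_eq_zero_of_lt (by simpa using hk), Nat.cast_zero, mul_zero]

theorem sum_range_le_add_pow (hδ : 0 ≤ δ) (hl : 0 ≤ l) (b n : ℕ) :
    ∑ k ∈ range n, δ ^ k * l ^ (b - k) * b.choose k ≤ (δ + l) ^ b := by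
  rcases le_total n (b + 1) with h | h
  · rw [add_pow]
    exact sum_le_sum_of_subset_of_nonneg (range_subset_range.2 h) fun _ _ _ => by positivity
  · exact (sum_range_choose_eq_add_pow h).le

theorem add_pow_le_sum_range_add {u : ℝ} (hδ : 0 ≤ δ) (hl : 0 ≤ l) (hu : δ + l ≤ u)
    (b n : ℕ) :
    (δ + l) ^ b ≤
      ∑ k ∈ range n, δ ^ k * l ^ (b - k) * b.choose k + δ ^ n * u ^ (b - n) * b.choose n := by
  rcases lt_or_ge b n with h | h
  · rw [Nat.choose_eq_zero_of_lt h, Nat.cast_zero, mul_zero, add_zero,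
      sum_range_choose_eq_add_pow h]
  have tail : ∑ k ∈ Ico n (b + 1), δ ^ k * l ^ (b - k) * b.choose k
      ≤ δ ^ n * (δ + l) ^ (b - n) * b.choose n := by
    rw [sum_Ico_eq_sum_range, add_pow, mul_sum, sum_mul, show b + 1 - n = b - n + 1 by omega]
    refine sum_le_sum fun k _ => ?_
    have hchoose : (b.choose (n + k) : ℝ) ≤ b.choose n * (b - n).choose k := by
      exact_mod_cast Nat.choose_add_le_choose_mul_choose b n k
    rw [pow_add, Nat.sub_add_eq]
    calc δ ^ n * δ ^ k * l ^ (b - n - k) * b.choose (n + k)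
        ≤ δ ^ n * δ ^ k * l ^ (b - n - k) * (b.choose n * (b - n).choose k) := by gcongr
      _ = _ := by ring
  calc (δ + l) ^ b = ∑ k ∈ range n, δ ^ k * l ^ (b - k) * b.choose k
        + ∑ k ∈ Ico n (b + 1), δ ^ k * l ^ (b - k) * b.choose k := by
        rw [add_pow, sum_range_add_sum_Ico _ (by omega)]
    _ ≤ _ := by
        gcongr
        exact tail.trans (by gcongr)

end BinomialTaylor

theorem mul_le_mul_add_mul_of_mem_Icc {y A B p S R : ℝ} (hA : y ≤ A) (hB : y ≤ B)
    (hB0 : 0 ≤ B) (hS : 0 ≤ S) (hR : 0 ≤ R) (hp : p ∈ Set.Icc S (S + R)) :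
    y * p ≤ A * S + B * R := by
  rcases le_total 0 y with hy | hy
  · nlinarith [hp.2]
  · nlinarith [hp.1]

theorem mul_pow_le_max_mul_pow (c : ℝ) {δ w : ℝ} (hδ : 0 ≤ δ) (hw : δ ≤ w) (k : ℕ) :
    c * δ ^ k ≤ max c 0 * w ^ k :=
  (mul_le_mul_of_nonneg_right (le_max_left c 0) (by positivity)).trans
    (mul_le_mul_of_nonneg_left (pow_le_pow_left₀ hδ hw k) (le_max_right c 0))

/-- Monomial list of an integer polynomial in `x, t`: `(c, a, b)` stands for `c * x ^ a * t ^ b`. -/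
abbrev BiPoly := List (ℤ × ℕ × ℕ)

namespace BiPoly

noncomputable def eval (P : BiPoly) (x t : ℝ) : ℝ :=
  (P.map fun m => (m.1 : ℝ) * x ^ m.2.1 * t ^ m.2.2).sum

section IntervalBound

variable {K : Type*} [Field K] [LinearOrder K]

def taylorCoeff (P : BiPoly) (xL xU l : K) (k : ℕ) : K :=
  (P.map fun m => max (m.1 * xU ^ m.2.1) (m.1 * xL ^ m.2.1) * l ^ (m.2.2 - k) * m.2.2.choose k).sum

def taylorRem (P : BiPoly) (xU u : K) (n : ℕ) : K :=
  (P.map fun m => max (m.1 * xU ^ m.2.1) 0 * u ^ (m.2.2 - n) * m.2.2.choose n).sum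

def intervalBound (P : BiPoly) (xL xU : K) (n : ℕ) (l u : K) : K :=
  ∑ k ∈ range n, max (taylorCoeff P xL xU l k) 0 * (u - l) ^ k +
    max (taylorRem P xU u n) 0 * (u - l) ^ n

end IntervalBound

theorem cast_intervalBound (P : BiPoly) (xL xU : ℚ) (n : ℕ) (l u : ℚ) :
    ((intervalBound P xL xU n l u : ℚ) : ℝ) = intervalBound P (xL : ℝ) xU n l u := by
  simp [intervalBound, taylorCoeff, taylorRem, Rat.cast_list_sum, Function.comp_def]

theorem int_mul_pow_le_max (c : ℤ) (a : ℕ) {x xL xU : ℝ} (hxL : 0 ≤ xL)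
    (hx : x ∈ Set.Icc xL xU) :
    c * x ^ a ≤ max (c * xU ^ a) (c * xL ^ a) ∧ c * x ^ a ≤ max (c * xU ^ a) 0 := by
  have hx0 : 0 ≤ x := hxL.trans hx.1
  rcases le_total 0 (c : ℝ) with hc | hc
  · have h : c * x ^ a ≤ c * xU ^ a := by gcongr; exact hx.2
    exact ⟨h.trans (le_max_left _ _), h.trans (le_max_left _ _)⟩
  · have h : c * x ^ a ≤ c * xL ^ a := mul_le_mul_of_nonpos_left (by gcongr; exact hx.1) hc
    exact ⟨h.trans (le_max_right _ _),
      (mul_nonpos_of_nonpos_of_nonneg hc (by positivity)).trans (le_max_right _ _)⟩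

theorem monomial_le (c : ℤ) (a b n : ℕ) {x xL xU δ l u : ℝ} (hxL : 0 ≤ xL)
    (hx : x ∈ Set.Icc xL xU) (hδ : 0 ≤ δ) (hl : 0 ≤ l) (hu : δ + l ≤ u) :
    c * x ^ a * (δ + l) ^ b ≤
      max (c * xU ^ a) (c * xL ^ a) * ∑ k ∈ range n, δ ^ k * l ^ (b - k) * b.choose k +
        max (c * xU ^ a) 0 * (δ ^ n * u ^ (b - n) * b.choose n) := by
  have hu0 : 0 ≤ u := by linarith
  exact mul_le_mul_add_mul_of_mem_Icc (int_mul_pow_le_max c a hxL hx).1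
    (int_mul_pow_le_max c a hxL hx).2 (le_max_right _ 0)
    (sum_nonneg fun _ _ => by positivity) (by positivity)
    ⟨sum_range_le_add_pow hδ hl b n, add_pow_le_sum_range_add hδ hl hu b n⟩

theorem eval_le_intervalBound (P : BiPoly) (n : ℕ) {xL xU x l u t : ℝ} (hxL : 0 ≤ xL)
    (hx : x ∈ Set.Icc xL xU) (hl : 0 ≤ l) (ht : t ∈ Set.Icc l u) :
    P.eval x t ≤ P.intervalBound xL xU n l u := by
  obtain ⟨δ, hδ, rfl⟩ : ∃ δ, 0 ≤ δ ∧ t = δ + l := ⟨t - l, sub_nonneg.2 ht.1, by ring⟩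
  have hw : δ ≤ u - l := by linarith [ht.2]
  calc P.eval x (δ + l)
      ≤ (P.map fun m => max (m.1 * xU ^ m.2.1) (m.1 * xL ^ m.2.1) *
            ∑ k ∈ range n, δ ^ k * l ^ (m.2.2 - k) * m.2.2.choose k +
          max (m.1 * xU ^ m.2.1) 0 * (δ ^ n * u ^ (m.2.2 - n) * m.2.2.choose n)).sum :=
        List.sum_le_sum fun m _ => monomial_le m.1 m.2.1 m.2.2 n hxL hx hδ hl ht.2
    _ = ∑ k ∈ range n, P.taylorCoeff xL xU l k * δ ^ k + P.taylorRem xU u n * δ ^ n := by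
        simp only [taylorCoeff, taylorRem, List.sum_map_add, mul_sum, List.sum_map_sum_comm,
          ← List.sum_map_mul_right]
        congr 1
        · exact sum_congr rfl fun k _ =>
            congr_arg List.sum (List.map_congr_left fun m _ => by ring)
        · exact congr_arg List.sum (List.map_congr_left fun m _ => by ring)
    _ ≤ P.intervalBound xL xU n l u :=
        add_le_add (sum_le_sum fun k _ => mul_pow_le_max_mul_pow _ hδ hw k)
          (mul_pow_le_max_mul_pow _ hδ hw n)

def checkCover (P : BiPoly) (xL xU : ℚ) (n : ℕ) (K : ℚ) : ℚ → List ℚ → Bool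
  | _, [] => true
  | l, u :: r =>
    decide (l ≤ u) && decide (intervalBound P xL xU n l u ≤ K) && checkCover P xL xU n K u r

theorem eval_le_of_checkCover {P : BiPoly} {xL xU : ℚ} {n : ℕ} {K : ℚ} {x t : ℝ}
    (hxL : 0 ≤ xL) (hx : x ∈ Set.Icc (xL : ℝ) xU) :
    ∀ {l : ℚ} {ps : List ℚ}, P.checkCover xL xU n K l ps = true → 0 ≤ l →
      t ∈ Set.Ioc (l : ℝ) ((l :: ps).getLast (List.cons_ne_nil l ps)) → P.eval x t ≤ K
  | l, [], _, _, ht => absurd ht (by simp)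
  | l, u :: ps, h, hl, ht => by
    simp only [checkCover, Bool.and_eq_true, decide_eq_true_eq] at h
    obtain ⟨⟨hlu, hbound⟩, hrest⟩ := h
    rcases le_or_gt t u with htu | htu
    · calc P.eval x t ≤ ((P.intervalBound xL xU n l u : ℚ) : ℝ) := by
            rw [cast_intervalBound]
            exact eval_le_intervalBound P n (by exact_mod_cast hxL) hx (by exact_mod_cast hl)
              ⟨ht.1.le, htu⟩
        _ ≤ K := by exact_mod_cast hbound
    · exact eval_le_of_checkCover hxL hx hrest (hl.trans hlu) ⟨htu, by simpa using ht.2⟩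

end BiPoly

theorem exp_neg_21_div_172_mem_Icc :
    exp (-(21 / 172)) ∈ Set.Icc (88506603 / 10 ^ 8 : ℝ) (88506604 / 10 ^ 8) := by
  have h := Real.exp_bound (x := -(21 / 172)) (by norm_num [abs_of_neg]) (n := 7) (by norm_num)
  norm_num [sum_range_succ, Nat.factorial, abs_le] at h
  constructor <;> linarith [h.1, h.2]

theorem exp_neg_23_div_86_le : exp (-(23 / 86)) ≤ 76533483 / 10 ^ 8 := by
  have h := Real.exp_bound (x := -(23 / 86)) (by norm_num [abs_of_neg]) (n := 9) (by norm_num)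
  norm_num [sum_range_succ, Nat.factorial, abs_le] at h
  linarith [h.2]

theorem frogT_succ (x y : ℝ) (k : ℕ) : frogT x y (k + 1) = 1 - ∑ i ∈ range (k + 1),
    ((k + 1).choose i : ℝ) * (x * y ^ (i + 1)) ^ (k + 1 - i) * frogT x y i := by
  rw [frogT, ← sum_attach (range (k + 1))]

theorem pstar_six : pstar 6 (46 / 197) = 23 / 86 := by norm_num [pstar]

theorem phat_46_div_197 : phat (46 / 197) = 46 / 151 := by norm_num [phat]

theorem Phi_six : Phi 6 (46 / 197) = exp (-(21 / 172)) := by norm_num [Phi, pstar_six]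

theorem Lam_six (l : ℝ) : Lam 6 (46 / 197) l = exp (-(l / 151)) ^ 21 := by
  rw [Lam, phat_46_div_197, ← exp_nat_mul]
  ring_nf

theorem frogF_six_summand (l x : ℝ) {u : ℕ} (hu : u < 6) :
    exp ((1 - phat (46 / 197) * (1 + (u : ℝ))) * l) * frogS 6 u x (Lam 6 (46 / 197) l) =
      ((5).choose u : ℝ) * x ^ (5 - u) *
        exp (-(l / 151)) ^ (21 * (u + 1) * (5 - u) + 46 * u - 105) *
          frogT x (exp (-(l / 151)) ^ 21) u := by
  have hweight : exp ((1 - phat (46 / 197) * (1 + (u : ℝ))) * l) *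
      exp (-(l / 151)) ^ (21 * (u + 1) * (5 - u)) =
        exp (-(l / 151)) ^ (21 * (u + 1) * (5 - u) + 46 * u - 105) :=
    exp_mul_exp_pow (by rw [phat_46_div_197]; interval_cases u <;> norm_num <;> ring)
  rw [frogS, Lam_six, ← hweight, show 6 - 1 - u = 5 - u by omega]
  ring

def frogPoly : BiPoly :=
  [(1, 0, 125), (5, 1, 184), (-5, 1, 230), (10, 2, 201), (-20, 2, 268), (-10, 2, 293),
    (20, 2, 314), (10, 3, 176), (-30, 3, 264), (-30, 3, 310), (-10, 3, 314), (60, 3, 331),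
    (60, 3, 356), (-60, 3, 377), (5, 4, 109), (-20, 4, 218), (-30, 4, 285), (-5, 4, 293),
    (60, 4, 306), (-20, 4, 310), (120, 4, 352), (40, 4, 356), (-120, 4, 373), (30, 4, 377),
    (-180, 4, 398), (120, 4, 419), (1, 5, 0), (-5, 5, 130), (-10, 5, 218), (-1, 5, 230),
    (20, 5, 239), (-10, 5, 264), (-5, 5, 268), (60, 5, 306), (10, 5, 314), (-60, 5, 327),
    (40, 5, 331), (30, 5, 352), (20, 5, 356), (-180, 5, 373), (-60, 5, 377), (120, 5, 394),
    (-90, 5, 398), (240, 5, 419), (-120, 5, 440)]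

theorem frogF_six_eq (l : ℝ) : frogF 6 (46 / 197) l =
    exp (-(23 / 86)) * frogPoly.eval (exp (-(21 / 172))) (exp (-(l / 151))) := by
  rw [frogF, pstar_six, Phi_six, sum_congr rfl fun u hu => frogF_six_summand l _ (mem_range.1 hu)]
  congr 1
  simp only [sum_range_succ, sum_range_zero, frogT_succ, frogT]
  norm_num [BiPoly.eval, frogPoly, Nat.choose]
  ring

-- The cover is finest near `t ≈ 0.9925`, where `frogPoly.eval X` is largest.
theorem frogPoly_checkCover :
    frogPoly.checkCover (88506603 / 10 ^ 8) (88506604 / 10 ^ 8) 8 (1633 / 1250) 0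
      [1583/2048, 915/1024, 1929/2048, 3949/4096, 125/128, 63/64, 1013/1024, 1015/1024,
        4063/4096, 4065/4096, 2033/2048, 4067/4096, 2037/2048, 2043/2048, 1] = true := by
  decide +kernel

/-- Theorem 1 (analytic core): `M^{6,46/197} < 1`, underlying `S_6 ≤ 46/197`. -/
theorem frogM_lt_one_d6 : frogM 6 ((46 : ℝ) / 197) < 1 := by
  have hX : exp (-(21 / 172)) ∈
      Set.Icc ((88506603 / 10 ^ 8 : ℚ) : ℝ) (88506604 / 10 ^ 8 : ℚ) := by
    push_cast
    exact exp_neg_21_div_172_mem_Icc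
  have hg : ∀ l ∈ Set.Ici (0 : ℝ),
      frogPoly.eval (exp (-(21 / 172))) (exp (-(l / 151))) ≤ 1633 / 1250 := fun l hl => by
    have hT : exp (-(l / 151)) ≤ 1 := exp_le_one_iff.2 (by linarith [Set.mem_Ici.1 hl])
    exact (BiPoly.eval_le_of_checkCover (by norm_num) hX frogPoly_checkCover le_rfl
      ⟨by exact_mod_cast exp_pos _, by simpa using hT⟩).trans (by norm_num)
  have hf : ∀ l ∈ Set.Ici (0 : ℝ),
      frogF 6 (46 / 197) l ≤ 76533483 / 10 ^ 8 * (1633 / 1250) := fun l hl => by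
    rw [frogF_six_eq]
    exact (mul_le_mul_of_nonneg_left (hg l hl) (exp_pos _).le).trans
      (mul_le_mul_of_nonneg_right exp_neg_23_div_86_le (by norm_num))
  calc frogM 6 (46 / 197) ≤ 76533483 / 10 ^ 8 * (1633 / 1250) :=
        csSup_le (Set.nonempty_Ici.image _) (Set.forall_mem_image.2 hf)
    _ < 1 := by norm_num
end

section
/- Fix an integer n ≥ 1. Let C_t^1 denote the number of distinct values among t i.i.d. draws uniform on a set of n coupons, and C_t^2 the number of distinct values among t i.i.d. draws uniform on a set of n+1 coupons. Then there exists a coupling of the two sequences of draws—i.e., a probability space carrying sequences (X_t)_{t≥1} and (Y_t)_{t≥1}, where the X_t are i.i.d. uniform on {1,…,n} and the Y_t are i.i.d. uniform on {1,…,n+1}—such that almost surely, for every t ≥ 0, the number of distinct values among X_1,…,X_t is at most the number of distinct values among Y_1,…,Y_t. In particular, C_t^1 is stochastically dominated by C_t^2 for every t: for all t ≥ 0 and all k, P(C_t^1 ≥ k) ≤ P(C_t^2 ≥ k). (Claim 8 in the paper.) -/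
/-!
A draw of the coupling is a pair `(y, u)`, uniform on `Fin (n + 1) × Fin n`: `y` is the second
collector's coupon and `u` an auxiliary coupon of the first collector. A permutation `τ` of
`Fin (n + 1)` labels the second collector's coupons by the first collector's ones, plus a spare
label `Fin.last n`. The first collector draws the label of `y`, or `u` if that label is the spare
one; in the latter case `τ` is composed with a swap so that `y` is now labelled `u`.

Whatever `τ` is, the first collector's draw is uniform on `Fin n`: a coupon `c` is drawn from the
`n` pairs `(τ⁻¹ c, ·)` and from the pair `(τ⁻¹ (Fin.last n), c)`. Since `τ` depends only on the
earlier draws, the first collector's draws are i.i.d. uniform. Every coupon collected by the first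
collector labels a coupon collected by the second, so `C_t^1 ≤ C_t^2` on every sample path.
-/

open MeasureTheory ProbabilityTheory Finset

/-- The number of distinct values among the draws `Z 0, …, Z (t-1)` of a sequence `Z`
(at a sample point `ω`); it is `0` when `t = 0`. -/
def distinctCount {Ω : Type*} {S : Type*} [DecidableEq S] (Z : ℕ → Ω → S) (t : ℕ) (ω : Ω) : ℕ :=
  ((Finset.range t).image (fun i => Z i ω)).card

section Innovation

variable {Ω S D E : Type*} {m mΩ : MeasurableSpace Ω} {mD : MeasurableSpace D}
  {P : Measure Ω} {Z : Ω → S} {ξ : Ω → D} {g : S → D → E}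

theorem measure_eq_tsum_inter_preimage_singleton [Countable S] (hm : m ≤ mΩ)
    (hZ : ∀ s, MeasurableSet[m] (Z ⁻¹' {s})) (C : Set Ω) :
    P C = ∑' s, P (C ∩ Z ⁻¹' {s}) := by
  have := tsum_measure_preimage_singleton (μ := P.restrict C) Set.countable_univ
      (fun s _ ↦ hm _ (hZ s))
  rw [tsum_univ (f := fun s ↦ P.restrict C (Z ⁻¹' {s})), Set.preimage_univ,
    Measure.restrict_apply_univ] at this
  simp_rw [← this, Measure.restrict_apply (hm _ (hZ _)), Set.inter_comm]

theorem measurableSet_preimage_of_fiberwise [Countable S]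
    (hZ : ∀ s, MeasurableSet[m] (Z ⁻¹' {s})) (hξ : Measurable[m] ξ) {C : Set E}
    (hC : ∀ s, MeasurableSet (g s ⁻¹' C)) :
    MeasurableSet[m] ((fun ω ↦ g (Z ω) (ξ ω)) ⁻¹' C) := by
  have : (fun ω ↦ g (Z ω) (ξ ω)) ⁻¹' C = ⋃ s, Z ⁻¹' {s} ∩ ξ ⁻¹' (g s ⁻¹' C) := by
    ext ω
    simp
  rw [this]
  exact .iUnion fun s ↦ (hZ s).inter (hξ (hC s))

variable {mE : MeasurableSpace E} {ρ : Measure E}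

theorem measure_inter_preimage_eq_mul_of_indep [Countable S] (hm : m ≤ mΩ)
    (hZ : ∀ s, MeasurableSet[m] (Z ⁻¹' {s})) (hξ : Measurable ξ) (hind : Indep m (mD.comap ξ) P)
    (hg : ∀ s, Measurable (g s)) (hρ : ∀ s, (P.map ξ).map (g s) = ρ)
    {A : Set Ω} (hA : MeasurableSet[m] A) {B : Set E} (hB : MeasurableSet B) :
    P (A ∩ (fun ω ↦ g (Z ω) (ξ ω)) ⁻¹' B) = P A * ρ B := by
  have hlevel (s : S) : A ∩ (fun ω ↦ g (Z ω) (ξ ω)) ⁻¹' B ∩ Z ⁻¹' {s} =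
      A ∩ Z ⁻¹' {s} ∩ ξ ⁻¹' (g s ⁻¹' B) := by
    ext ω
    simp only [Set.mem_inter_iff, Set.mem_preimage, Set.mem_singleton_iff]
    constructor
    · rintro ⟨⟨hA, hB⟩, rfl⟩; exact ⟨⟨hA, rfl⟩, hB⟩
    · rintro ⟨⟨hA, rfl⟩, hB⟩; exact ⟨⟨hA, hB⟩, rfl⟩
  have hξB (s : S) : P (ξ ⁻¹' (g s ⁻¹' B)) = ρ B := by
    rw [← hρ s, Measure.map_apply (hg s) hB, Measure.map_apply hξ (hg s hB)]
  calc P (A ∩ (fun ω ↦ g (Z ω) (ξ ω)) ⁻¹' B)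
      = ∑' s, P (A ∩ Z ⁻¹' {s}) * ρ B := by
        rw [measure_eq_tsum_inter_preimage_singleton hm hZ]
        refine tsum_congr fun s ↦ ?_
        rw [hlevel, (Indep_iff _ _ _).1 hind _ _ (hA.inter (hZ s)) ⟨_, hg s hB, rfl⟩, hξB]
    _ = P A * ρ B := by
        rw [ENNReal.tsum_mul_right, ← measure_eq_tsum_inter_preimage_singleton hm hZ]

theorem indep_comap_of_indep [IsProbabilityMeasure P] [Countable S] (hm : m ≤ mΩ)
    (hZ : ∀ s, MeasurableSet[m] (Z ⁻¹' {s})) (hξ : Measurable ξ) (hind : Indep m (mD.comap ξ) P)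
    (hg : ∀ s, Measurable (g s)) (hρ : ∀ s, (P.map ξ).map (g s) = ρ) :
    Indep m (mE.comap fun ω ↦ g (Z ω) (ξ ω)) P := by
  rw [Indep_iff]
  rintro A _ hA ⟨B, hB, rfl⟩
  rw [measure_inter_preimage_eq_mul_of_indep hm hZ hξ hind hg hρ hA hB,
    ← Set.univ_inter (_ ⁻¹' B),
    measure_inter_preimage_eq_mul_of_indep hm hZ hξ hind hg hρ .univ hB, measure_univ, one_mul]

theorem map_eq_of_indep [IsProbabilityMeasure P] [Countable S] (hm : m ≤ mΩ)
    (hZ : ∀ s, MeasurableSet[m] (Z ⁻¹' {s})) (hξ : Measurable ξ) (hind : Indep m (mD.comap ξ) P)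
    (hg : ∀ s, Measurable (g s)) (hρ : ∀ s, (P.map ξ).map (g s) = ρ) :
    P.map (fun ω ↦ g (Z ω) (ξ ω)) = ρ := by
  ext B hB
  rw [Measure.map_apply (fun _ hB ↦ measurableSet_preimage_of_fiberwise (fun s ↦ hm _ (hZ s)) hξ
      fun s ↦ hg s hB) hB, ← Set.univ_inter (_ ⁻¹' B),
    measure_inter_preimage_eq_mul_of_indep hm hZ hξ hind hg hρ .univ hB, measure_univ, one_mul]

end Innovation

theorem iIndepFun_of_indep_past {Ω E : Type*} {mΩ : MeasurableSpace Ω} {mE : MeasurableSpace E}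
    {P : Measure Ω} [IsProbabilityMeasure P] {X : ℕ → Ω → E} {m : ℕ → MeasurableSpace Ω}
    (hXm : ∀ i t, i < t → Measurable[m t] (X i)) (hind : ∀ t, Indep (m t) (mE.comap (X t)) P) :
    iIndepFun X P := by
  rw [iIndepFun_iff_measure_inter_preimage_eq_mul]
  intro S
  induction S using Finset.induction_on_max with
  | empty => simp
  | insert a s hlt ih =>
    intro B hB
    have hpast : MeasurableSet[m a] (⋂ i ∈ s, X i ⁻¹' B i) :=
      .biInter s.countable_toSet fun i hi ↦ hXm i a (hlt i hi) (hB i (mem_insert_of_mem hi))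
    rw [set_biInter_insert, Set.inter_comm, prod_insert fun ha ↦ (hlt a ha).false,
      (Indep_iff _ _ _).1 (hind a) _ _ hpast ⟨_, hB a (mem_insert_self a s), rfl⟩,
      ih fun i hi ↦ hB i (mem_insert_of_mem hi), mul_comm]

section PiFinset

variable {ι : Type*} {X : ι → Type*} [∀ i, MeasurableSpace (X i)]

theorem measurable_eval_piFinset {s : Finset ι} {i : ι} (h : i ∈ s) :
    Measurable[Filtration.piFinset s] fun ω : (∀ i, X i) ↦ ω i :=
  (measurable_pi_apply (⟨i, h⟩ : s)).comp (comap_measurable (Finset.restrict (π := X) s))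

theorem indep_piFinset_eval (μ : ∀ i, Measure (X i)) [∀ i, IsProbabilityMeasure (μ i)]
    {s : Finset ι} {i : ι} (h : i ∉ s) :
    Indep (Filtration.piFinset s) (MeasurableSpace.comap (fun ω : (∀ i, X i) ↦ ω i) inferInstance)
      (Measure.infinitePi μ) := by
  have := (iIndepFun_infinitePi (P := μ) (X := fun _ ↦ id) fun _ ↦ measurable_id)
    |>.indepFun_finset s {i} (disjoint_singleton_right.2 h) fun _ ↦ measurable_pi_apply _
  exact this.comp measurable_id (measurable_pi_apply ⟨i, mem_singleton_self i⟩)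

theorem infinitePi_map_comp_eval {Y : Type*} [MeasurableSpace Y] (μ : ∀ i, Measure (X i))
    [∀ i, IsProbabilityMeasure (μ i)] {i : ι} {f : X i → Y} (hf : Measurable f) :
    (Measure.infinitePi μ).map (fun ω ↦ f (ω i)) = (μ i).map f := by
  change (Measure.infinitePi μ).map (f ∘ fun ω ↦ ω i) = _
  rw [← Measure.map_map hf (measurable_pi_apply i), Measure.infinitePi_map_eval]

end PiFinset

section Mealy

variable {S D E : Type*} [MeasurableSpace D] [MeasurableSpace E]
  (step : S → D → S) (s₀ : S) (out : S → D → E)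

def mealyState : ℕ → (ℕ → D) → S
  | 0, _ => s₀
  | t + 1, ω => step (mealyState t ω) (ω t)

def mealyOutput (t : ℕ) (ω : ℕ → D) : E :=
  out (mealyState step s₀ t ω) (ω t)

variable {step s₀ out} [Countable S]

theorem measurableSet_mealyState_preimage (hstep : ∀ s s', MeasurableSet {d | step s d = s'})
    (t : ℕ) (s : S) :
    MeasurableSet[Filtration.piFinset (range t)] (mealyState step s₀ t ⁻¹' {s}) := by
  induction t generalizing s with
  | zero => by_cases h : s₀ = s <;> simp [mealyState, h]
  | succ t ih =>
    exact measurableSet_preimage_of_fiberwise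
      (fun s' ↦ Filtration.piFinset.mono (range_subset_range.2 t.le_succ) _ (ih s'))
      (measurable_eval_piFinset (self_mem_range_succ t)) fun s' ↦ hstep s' s

theorem measurable_mealyOutput (hstep : ∀ s s', MeasurableSet {d | step s d = s'})
    (hout : ∀ s, Measurable (out s)) (t : ℕ) :
    Measurable[Filtration.piFinset (range (t + 1))] (mealyOutput step s₀ out t) := fun _ hB ↦
  measurableSet_preimage_of_fiberwise
    (fun s ↦ Filtration.piFinset.mono (range_subset_range.2 t.le_succ) _
      (measurableSet_mealyState_preimage hstep t s))
    (measurable_eval_piFinset (self_mem_range_succ t)) fun s ↦ hout s hB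

variable {ν : Measure D} [IsProbabilityMeasure ν] {ρ : Measure E}

theorem indep_piFinset_range_mealyOutput (hstep : ∀ s s', MeasurableSet {d | step s d = s'})
    (hout : ∀ s, Measurable (out s)) (hρ : ∀ s, ν.map (out s) = ρ) (t : ℕ) :
    Indep (Filtration.piFinset (range t))
      (MeasurableSpace.comap (mealyOutput step s₀ out t) inferInstance)
      (Measure.infinitePi fun _ ↦ ν) :=
  indep_comap_of_indep (Z := mealyState step s₀ t) (g := out) (Filtration.piFinset.le _)
    (measurableSet_mealyState_preimage hstep t) (measurable_pi_apply t)
    (indep_piFinset_eval _ notMem_range_self) hout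
    (by simpa [Measure.infinitePi_map_eval] using hρ)

theorem map_mealyOutput (hstep : ∀ s s', MeasurableSet {d | step s d = s'})
    (hout : ∀ s, Measurable (out s)) (hρ : ∀ s, ν.map (out s) = ρ) (t : ℕ) :
    (Measure.infinitePi fun _ ↦ ν).map (mealyOutput step s₀ out t) = ρ :=
  map_eq_of_indep (Z := mealyState step s₀ t) (g := out) (Filtration.piFinset.le _)
    (measurableSet_mealyState_preimage hstep t) (measurable_pi_apply t)
    (indep_piFinset_eval _ notMem_range_self) hout
    (by simpa [Measure.infinitePi_map_eval] using hρ)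

theorem iIndepFun_mealyOutput (hstep : ∀ s s', MeasurableSet {d | step s d = s'})
    (hout : ∀ s, Measurable (out s)) (hρ : ∀ s, ν.map (out s) = ρ) :
    iIndepFun (mealyOutput step s₀ out) (Measure.infinitePi fun _ ↦ ν) :=
  iIndepFun_of_indep_past
    (fun i _ h ↦ (measurable_mealyOutput hstep hout i).mono
      (Filtration.piFinset.mono (range_subset_range.2 h)) le_rfl)
    (indep_piFinset_range_mealyOutput hstep hout hρ)

end Mealy

theorem map_uniformOn_univ_of_card_fiber {α β : Type*} [Fintype α] [Fintype β] [DecidableEq β]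
    [MeasurableSpace α] [MeasurableSingletonClass α] [MeasurableSpace β]
    [MeasurableSingletonClass β] (f : α → β) {k : ℕ} (hk : k ≠ 0) (hf : ∀ b, #{a | f a = b} = k) :
    (uniformOn Set.univ : Measure α).map f = uniformOn Set.univ := by
  have hcard : Fintype.card α = k * Fintype.card β := by
    rw [← card_univ, card_eq_sum_card_fiberwise (fun a _ ↦ mem_univ (f a))]
    simp [hf, mul_comm]
  refine Measure.ext_iff_singleton.2 fun b ↦ ?_
  have hfiber : f ⁻¹' {b} = ↑({a | f a = b} : Finset α) := by ext; simp
  rw [Measure.map_apply (measurable_of_finite f) (measurableSet_singleton b), uniformOn_univ,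
    uniformOn_univ, Measure.count_singleton, hfiber, Measure.count_apply_finset,
    hf, hcard, Nat.cast_mul, ← ENNReal.mul_div_mul_left 1 _ (Nat.cast_ne_zero.2 hk)
      (ENNReal.natCast_ne_top k), mul_one]

theorem measure_eq_one_div_of_map_eq_uniformOn {Ω : Type*} [MeasurableSpace Ω] {μ : Measure Ω}
    {k : ℕ} {X : Ω → Fin k} (hX : Measurable X) (h : μ.map X = uniformOn Set.univ) (c : Fin k) :
    μ {ω | X ω = c} = 1 / k := by
  change μ (X ⁻¹' {c}) = _
  rw [← Measure.map_apply hX (measurableSet_singleton c), h, uniformOn_univ]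
  simp

theorem card_filter_fst_eq {α β : Type*} [Fintype α] [Fintype β] [DecidableEq α] (a : α) :
    #{d : α × β | d.1 = a} = Fintype.card β := by
  have : ({d : α × β | d.1 = a} : Finset _) = {a} ×ˢ univ := by
    ext ⟨x, y⟩
    simp [eq_comm]
  rw [this, card_product, card_singleton, card_univ, one_mul]

section Coupling

variable (n : ℕ)

def drawLabel (τ : Equiv.Perm (Fin (n + 1))) (d : Fin (n + 1) × Fin n) : Fin n :=
  if h : τ d.1 = Fin.last n then d.2 else (τ d.1).castPred h

def relabel (τ : Equiv.Perm (Fin (n + 1))) (d : Fin (n + 1) × Fin n) : Equiv.Perm (Fin (n + 1)) :=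
  if τ d.1 = Fin.last n then Equiv.swap (Fin.last n) d.2.castSucc * τ else τ

variable {n}

theorem card_filter_drawLabel_eq (τ : Equiv.Perm (Fin (n + 1))) (c : Fin n) :
    #{d | drawLabel n τ d = c} = n + 1 := by
  have hfiber : ({d | drawLabel n τ d = c} : Finset _) =
      {(τ.symm (Fin.last n), c)} ∪ {τ.symm c.castSucc} ×ˢ univ := by
    ext ⟨y, u⟩
    simp only [mem_filter, mem_univ, true_and, mem_union, mem_singleton, mem_product,
      and_true, Prod.mk.injEq, Equiv.eq_symm_apply]
    unfold drawLabel
    split_ifs with h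
    · simp [h, eq_comm, (Fin.castSucc_lt_last c).ne]
    · simp [h, Fin.castPred_eq_iff_eq_castSucc]
  rw [hfiber, card_union_of_disjoint, card_singleton, card_product, card_singleton, card_univ,
    Fintype.card_fin, add_comm, one_mul]
  simp [(Fin.castSucc_lt_last c).ne]

theorem castSucc_mem_image_relabel {τ : Equiv.Perm (Fin (n + 1))} {A : Finset (Fin n)}
    {B : Finset (Fin (n + 1))} (h : ∀ x ∈ A, x.castSucc ∈ B.image τ) (d : Fin (n + 1) × Fin n) :
    ∀ x ∈ insert (drawLabel n τ d) A, x.castSucc ∈ (insert d.1 B).image (relabel n τ d) := by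
  obtain ⟨y, u⟩ := d
  intro x hx
  rw [mem_insert] at hx
  by_cases hy : τ y = Fin.last n
  · have hrel : relabel n τ (y, u) = Equiv.swap (Fin.last n) u.castSucc * τ := if_pos hy
    have hdraw : drawLabel n τ (y, u) = u := dif_pos hy
    rw [hrel]
    rcases eq_or_ne x u with rfl | hxu
    · exact mem_image.2 ⟨y, mem_insert_self _ _, by simp [hy]⟩
    · obtain ⟨z, hz, hτz⟩ := mem_image.1 (h x (hx.resolve_left (hdraw.symm ▸ hxu)))
      refine mem_image.2 ⟨z, mem_insert_of_mem hz, ?_⟩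
      rw [Equiv.Perm.mul_apply, hτz, Equiv.swap_apply_of_ne_of_ne (Fin.castSucc_lt_last x).ne
        ((Fin.castSucc_injective n).ne hxu)]
  · have hrel : relabel n τ (y, u) = τ := if_neg hy
    have hdraw : (drawLabel n τ (y, u)).castSucc = τ y := by simp [drawLabel, hy]
    rw [hrel]
    rcases hx with rfl | hx
    · exact mem_image.2 ⟨y, mem_insert_self _ _, hdraw.symm⟩
    · exact image_subset_image (subset_insert _ _) (h x hx)

theorem card_le_card_of_castSucc_mem_image {τ : Equiv.Perm (Fin (n + 1))} {A : Finset (Fin n)}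
    {B : Finset (Fin (n + 1))} (h : ∀ x ∈ A, x.castSucc ∈ B.image τ) : #A ≤ #B :=
  calc #A = #(A.map Fin.castSuccEmb) := (card_map _).symm
    _ ≤ #(B.image τ) := card_le_card fun z hz ↦ by
        obtain ⟨x, hx, rfl⟩ := mem_map.1 hz
        exact h x hx
    _ ≤ #B := card_image_le

theorem distinctCount_mealyOutput_le_distinctCount_fst (ω : ℕ → Fin (n + 1) × Fin n) (t : ℕ) :
    distinctCount (mealyOutput (relabel n) 1 (drawLabel n)) t ω ≤
      distinctCount (fun t ω ↦ (ω t).1) t ω := by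
  have hlabel : ∀ t, ∀ x ∈ (range t).image (mealyOutput (relabel n) 1 (drawLabel n) · ω),
      x.castSucc ∈ ((range t).image fun i ↦ (ω i).1).image ⇑(mealyState (relabel n) 1 t ω) := by
    intro t
    induction t with
    | zero => simp
    | succ t ih =>
      rw [range_add_one, image_insert, image_insert]
      exact castSucc_mem_image_relabel ih (ω t)
  exact card_le_card_of_castSucc_mem_image (hlabel t)

end Coupling

/-- Claim 8: for any `n ≥ 1` there is a coupling of an i.i.d. uniform sequence `X` on a set of
`n` coupons with an i.i.d. uniform sequence `Y` on a set of `n+1` coupons such that almost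
surely, for every `t ≥ 0`, the number of distinct coupons collected by the first collector
after `t` draws is at most that of the second collector.  In particular, `C_t^1` is
stochastically dominated by `C_t^2`:  `P(C_t^1 ≥ k) ≤ P(C_t^2 ≥ k)` for all `t, k`. -/
theorem coupon_collector_coupling (n : ℕ) (hn : 1 ≤ n) :
    ∃ (Ω : Type) (_ : MeasurableSpace Ω) (μ : Measure Ω) (_ : IsProbabilityMeasure μ)
      (X : ℕ → Ω → Fin n) (Y : ℕ → Ω → Fin (n + 1)),
      -- the `X t` are i.i.d. uniform on a set of `n` coupons
      iIndepFun X μ ∧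
      (∀ t, Measurable (X t)) ∧
      (∀ t, ∀ c : Fin n, μ {ω | X t ω = c} = 1 / n) ∧
      -- the `Y t` are i.i.d. uniform on a set of `n + 1` coupons
      iIndepFun Y μ ∧
      (∀ t, Measurable (Y t)) ∧
      (∀ t, ∀ c : Fin (n + 1), μ {ω | Y t ω = c} = 1 / (n + 1)) ∧
      -- almost surely, for every `t`, `C_t^1 ≤ C_t^2`
      (∀ᵐ ω ∂μ, ∀ t, distinctCount X t ω ≤ distinctCount Y t ω) ∧
      -- in particular, stochastic domination `C_t^1 ⪯ C_t^2` for every `t`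
      (∀ t k, μ {ω | k ≤ distinctCount X t ω} ≤ μ {ω | k ≤ distinctCount Y t ω}) := by
  have : NeZero n := ⟨by omega⟩
  set ν : Measure (Fin (n + 1) × Fin n) := uniformOn Set.univ
  have hstep : ∀ τ τ', MeasurableSet {d | relabel n τ d = τ'} := fun _ _ ↦ .of_discrete
  have hout : ∀ τ, Measurable (drawLabel n τ) := fun _ ↦ measurable_of_finite _
  have hlabel : ∀ τ, ν.map (drawLabel n τ) = uniformOn Set.univ := fun τ ↦
    map_uniformOn_univ_of_card_fiber _ n.succ_ne_zero (card_filter_drawLabel_eq τ)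
  have hmeasX (t : ℕ) : Measurable (mealyOutput (relabel n) 1 (drawLabel n) t) :=
    (measurable_mealyOutput hstep hout t).mono (Filtration.piFinset.le _) le_rfl
  have hmeasY (t : ℕ) : Measurable fun ω : ℕ → Fin (n + 1) × Fin n ↦ (ω t).1 := by fun_prop
  have hlawY (t : ℕ) :
      (Measure.infinitePi fun _ ↦ ν).map (fun ω ↦ (ω t).1) = uniformOn Set.univ :=
    (infinitePi_map_comp_eval (fun _ ↦ ν) (i := t) measurable_fst).trans
      (map_uniformOn_univ_of_card_fiber _ Fintype.card_ne_zero card_filter_fst_eq)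
  refine ⟨_, _, Measure.infinitePi fun _ ↦ ν, inferInstance,
    mealyOutput (relabel n) 1 (drawLabel n), fun t ω ↦ (ω t).1,
    iIndepFun_mealyOutput hstep hout hlabel, hmeasX,
    fun t ↦ measure_eq_one_div_of_map_eq_uniformOn (hmeasX t)
      (map_mealyOutput hstep hout hlabel t),
    iIndepFun_infinitePi fun _ ↦ measurable_fst, hmeasY,
    fun t c ↦ by simpa using measure_eq_one_div_of_map_eq_uniformOn (hmeasY t) (hlawY t) c,
    .of_forall fun ω t ↦ distinctCount_mealyOutput_le_distinctCount_fst ω t,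
    fun t k ↦ measure_mono fun ω hω ↦
      hω.trans (distinctCount_mealyOutput_le_distinctCount_fst ω t)⟩
end

section
/- For all integers d ≥ 2, all real p with 0 < p < 1/2, and all integers n with 1 ≤ n ≤ d−1: (1 − p_d^*)·(n/d) < (1 − p_{d+1}^*)·((n+1)/(d+1)). (This is the key inequality used in the couplings proving Theorem 2 and Lemma 6; the case n = d−1 reads (1 − p_d^*)(d−1)/d < (1 − p_{d+1}^*)d/(d+1).) -/
/-! Clearing the denominator gives `1 - p_d^* = d (1 - 2p) / (d - (d+1) p)`, so the left side is
`n (1 - 2p) / (d - (d+1) p)` and the right side is the same expression at `(n+1, d+1)`. Both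
denominators are positive for `p < 1/2`, and cross-multiplying leaves
`p (d + 1 - n) < d - n`, which holds because `p < 1/2` and `n + 1 ≤ d`. -/

open Real Finset

lemma sub_mul_pos_of_lt_half {d p : ℝ} (hd : 1 ≤ d) (hp : p < 1 / 2) : 0 < d - (d + 1) * p := by
  nlinarith

lemma one_sub_pstar_mul_div {d : ℕ} {p : ℝ} (hd : 1 ≤ d) (hp : p < 1 / 2) (x : ℝ) :
    (1 - pstar d p) * (x / d) = x * (1 - 2 * p) / (d - (d + 1) * p) := by
  have hd' : (1 : ℝ) ≤ d := by exact_mod_cast hd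
  have hD := sub_mul_pos_of_lt_half hd' hp
  rw [pstar, one_sub_div hD.ne', div_mul_div_comm,
    div_eq_div_iff (mul_pos hD (by linarith)).ne' hD.ne']
  ring

lemma mul_sub_mul_lt_of_add_one_le {n d p : ℝ} (hnd : n + 1 ≤ d) (hp : p < 1 / 2) :
    n * ((d + 1) - (d + 2) * p) < (n + 1) * (d - (d + 1) * p) := by
  -- the difference is `(d - n - 1) / 2 + (1/2 - p) (d + 1 - n)`
  nlinarith [mul_pos (sub_pos.mpr hp) (by linarith : (0 : ℝ) < d + 1 - n)]

theorem key_coupling_inequality_general (d : ℕ) (p : ℝ)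
    (hp : p < 1 / 2) (n : ℕ) (hn : n ≤ d - 1) :
    (1 - pstar d p) * ((n : ℝ) / (d : ℝ)) <
      (1 - pstar (d + 1) p) * (((n : ℝ) + 1) / ((d : ℝ) + 1)) := by
  have h2p : 0 < 1 - 2 * p := by linarith
  have hDsucc := sub_mul_pos_of_lt_half (by linarith [d.cast_nonneg (α := ℝ)] : (1 : ℝ) ≤ d + 1) hp
  have hrhs := one_sub_pstar_mul_div (Nat.le_add_left 1 d) hp ((n : ℝ) + 1)
  push_cast at hrhs
  rw [hrhs]
  rcases Nat.eq_zero_or_pos n with rfl | hn1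
  · simp only [Nat.cast_zero, zero_div, mul_zero]
    positivity
  have hnd : (n : ℝ) + 1 ≤ d := by exact_mod_cast (by omega : n + 1 ≤ d)
  have hD := sub_mul_pos_of_lt_half (by linarith : (1 : ℝ) ≤ d) hp
  rw [one_sub_pstar_mul_div (by omega) hp, div_lt_div_iff₀ hD hDsucc]
  have key := mul_lt_mul_of_pos_right (mul_sub_mul_lt_of_add_one_le hnd hp) h2p
  linarith

/-- The key coupling inequality behind Theorem 2 and Lemma 6: for integers `d ≥ 2`,
real `0 < p < 1/2`, and integers `1 ≤ n ≤ d-1`,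
`(1 - p_d^*)·(n/d) < (1 - p_{d+1}^*)·((n+1)/(d+1))`. -/
theorem key_coupling_inequality (d : ℕ) (hd : 2 ≤ d) (p : ℝ) (hp0 : 0 < p)
    (hp : p < 1 / 2) (n : ℕ) (hn1 : 1 ≤ n) (hn : n ≤ d - 1) :
    (1 - pstar d p) * ((n : ℝ) / (d : ℝ)) <
      (1 - pstar (d + 1) p) * (((n : ℝ) + 1) / ((d : ℝ) + 1)) :=
  key_coupling_inequality_general d p hp n hn
end
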